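/- Let T be a finite tree of order n ≥ 4 whose diameter equals 3. Then γ(M(T)) = n − 2, where γ denotes the domination number. -/

import Mathlib

/-- `S` is a dominating set of the graph `H`. -/
def IsDomSet {V : Type*} (H : SimpleGraph V) (S : Set V) : Prop :=
  ∀ v : V, v ∈ S ∨ ∃ s ∈ S, H.Adj v s

/-- The domination number of a graph `H`. -/
noncomputable def domNum {V : Type*} (H : SimpleGraph V) : ℕ :=
  sInf {k : ℕ | ∃ S : Set V, IsDomSet H S ∧ S.ncard = k}

/-- The middle graph `M(G)` of a graph `G`: its vertices are the vertices and edges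
of `G`; a vertex is adjacent to the edges incident to it, and two edges are adjacent
iff they are distinct and share an endpoint. -/
def middleGraph {V : Type*} (G : SimpleGraph V) : SimpleGraph (V ⊕ G.edgeSet) where
  Adj x y :=
    match x, y with
    | Sum.inl _, Sum.inl _ => False
    | Sum.inl v, Sum.inr e => v ∈ (e : Sym2 V)
    | Sum.inr e, Sum.inl v => v ∈ (e : Sym2 V)
    | Sum.inr e, Sum.inr f => e ≠ f ∧ ∃ v, v ∈ (e : Sym2 V) ∧ v ∈ (f : Sym2 V)
  symm := by
    constructor
    rintro (v | e) (w | f) h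
    · exact h.elim
    · exact h
    · exact h
    · exact ⟨Ne.symm h.1, h.2.imp fun v hv => ⟨hv.2, hv.1⟩⟩
  loopless := by
    constructor
    rintro (v | e) h
    · exact h.elim
    · exact h.1 rfl


/-!
A tree of diameter `3` is a double star: a central edge `xy` such that every other vertex is a
leaf hanging from `x` or from `y`, with at least one leaf at each. In `M(T)` a vertex of `T` is
dominated only by itself and its incident edges, and an edge dominates two vertices of `T` only
if they are adjacent; hence `γ(M(T))` is at least the size of any independent set of `T`, such
as the `n - 2` leaves. Conversely, any set of edges covering every vertex of `T` dominates
`M(T)`, and the `n - 2` pendant edges do.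
-/

section Domination

variable {W : Type*} (H : SimpleGraph W)

lemma isDomSet_univ : IsDomSet H Set.univ := fun _ => Or.inl trivial

lemma domNum_le_ncard {S : Set W} (hS : IsDomSet H S) : domNum H ≤ S.ncard :=
  Nat.sInf_le ⟨S, hS, rfl⟩

lemma exists_isDomSet_ncard_eq_domNum : ∃ S, IsDomSet H S ∧ S.ncard = domNum H :=
  Nat.sInf_mem (s := {k | ∃ S, IsDomSet H S ∧ S.ncard = k}) ⟨_, Set.univ, isDomSet_univ H, rfl⟩

end Domination

section MiddleGraph

variable {V : Type*} {G : SimpleGraph V}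

lemma eq_or_adj_of_middleGraph {w w' : V} {s : V ⊕ G.edgeSet}
    (hw : s = Sum.inl w ∨ (middleGraph G).Adj (Sum.inl w) s)
    (hw' : s = Sum.inl w' ∨ (middleGraph G).Adj (Sum.inl w') s) : w = w' ∨ G.Adj w w' := by
  rcases s with z | ⟨e, he⟩
  · simp only [Sum.inl.injEq, middleGraph, or_false] at hw hw'
    exact Or.inl (hw.symm.trans hw')
  · simp only [reduceCtorEq, false_or, middleGraph] at hw hw'
    by_cases hww' : w = w'
    · exact Or.inl hww'
    · exact Or.inr ((Sym2.mem_and_mem_iff hww').mp ⟨hw, hw'⟩ ▸ he : s(w, w') ∈ G.edgeSet)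

lemma ncard_le_ncard_of_isDomSet_middleGraph [Finite V] {D : Set (V ⊕ G.edgeSet)}
    (hD : IsDomSet (middleGraph G) D) {L : Set V} (hL : G.IsIndepSet L) : L.ncard ≤ D.ncard := by
  have hdom : ∀ w, ∃ s ∈ D, s = Sum.inl w ∨ (middleGraph G).Adj (Sum.inl w) s := fun w =>
    (hD (Sum.inl w)).elim (fun h => ⟨_, h, Or.inl rfl⟩) fun ⟨s, hs, hadj⟩ => ⟨s, hs, Or.inr hadj⟩
  choose g hgD hg using hdom
  refine Set.ncard_le_ncard_of_injOn g (fun w _ => hgD w) ?_ D.toFinite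
  intro w hw w' hw' hgw
  by_contra hne
  exact hL hw hw' hne ((eq_or_adj_of_middleGraph (hg w) (hgw ▸ hg w')).resolve_left hne)

lemma ncard_le_domNum_middleGraph [Finite V] {L : Set V} (hL : G.IsIndepSet L) :
    L.ncard ≤ domNum (middleGraph G) := by
  obtain ⟨D, hD, hcard⟩ := exists_isDomSet_ncard_eq_domNum (middleGraph G)
  exact hcard ▸ ncard_le_ncard_of_isDomSet_middleGraph hD hL

lemma isDomSet_middleGraph_of_forall_exists_mem {P : Set G.edgeSet}
    (hP : ∀ v, ∃ e ∈ P, v ∈ (e : Sym2 V)) : IsDomSet (middleGraph G) (Sum.inr '' P) := by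
  rintro (v | e)
  · obtain ⟨e, he, hv⟩ := hP v
    exact Or.inr ⟨Sum.inr e, ⟨e, he, rfl⟩, hv⟩
  · set a := (e : Sym2 V).out.1
    have ha : a ∈ (e : Sym2 V) := Sym2.out_fst_mem _
    obtain ⟨f, hf, haf⟩ := hP a
    by_cases hfe : f = e
    · exact Or.inl ⟨f, hf, congrArg Sum.inr hfe⟩
    · exact Or.inr ⟨Sum.inr f, ⟨f, hf, rfl⟩, Ne.symm hfe, a, ha, haf⟩

lemma domNum_middleGraph_le_ncard {P : Set G.edgeSet} (hP : ∀ v, ∃ e ∈ P, v ∈ (e : Sym2 V)) :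
    domNum (middleGraph G) ≤ P.ncard := by
  rw [← Set.ncard_image_of_injective P Sum.inr_injective]
  exact domNum_le_ncard _ (isDomSet_middleGraph_of_forall_exists_mem hP)

end MiddleGraph

namespace SimpleGraph

variable {V : Type*} {T : SimpleGraph V}

/-- If both `w → a → b` and `w → c → b` were geodesic, the two geodesics would be distinct
paths from `w` to `b`. -/
lemma IsTree.dist_eq_dist_add_one_of_adj_of_ne (hT : T.IsTree) (w : V) {a b c : V}
    (hab : T.Adj a b) (hbc : T.Adj b c) (hca : c ≠ a) (h : T.dist w b = T.dist w a + 1) :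
    T.dist w c = T.dist w b + 1 := by
  refine (hT.dist_eq_dist_add_one_of_adj w hbc).resolve_left fun h' => hca ?_
  obtain ⟨p, -, hp⟩ := hT.connected.exists_path_of_dist w a
  obtain ⟨q, -, hq⟩ := hT.connected.exists_path_of_dist w c
  have hpb : (p.concat hab).IsPath := (p.concat hab).isPath_of_length_eq_dist (by simp [hp, h])
  have hqb : (q.concat hbc.symm).IsPath :=
    (q.concat hbc.symm).isPath_of_length_eq_dist (by simp [hq, h'])
  have := congrArg Subtype.val ((hT.isAcyclic.subsingleton_path w b).elim ⟨_, hpb⟩ ⟨_, hqb⟩)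
  exact (Walk.concat_inj this).1.symm

lemma IsTree.not_adj_of_adj_of_adj (hT : T.IsTree) {a b w w' : V} (hab : T.Adj a b)
    (hwa : T.Adj w a) (hwb : w ≠ b) (hw'a : w' ≠ a) (hw' : T.Adj w' a ∨ T.Adj w' b) :
    ¬T.Adj w w' := by
  intro hww'
  have haw : T.dist a w = T.dist a a + 1 := by simp [dist_eq_one_iff_adj.mpr hwa.symm]
  have haw' := hT.dist_eq_dist_add_one_of_adj_of_ne a hwa.symm hww' hw'a haw
  rw [dist_eq_one_iff_adj.mpr hwa.symm] at haw'
  rcases hw' with hw'a | hw'b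
  · simp [dist_eq_one_iff_adj.mpr hw'a.symm] at haw'
  · have hab' := hT.dist_eq_dist_add_one_of_adj_of_ne a hww' hw'b hwb.symm
      (by rw [haw', dist_eq_one_iff_adj.mpr hwa.symm])
    simp [dist_eq_one_iff_adj.mpr hab, haw'] at hab'

lemma IsTree.isIndepSet_compl_pair (hT : T.IsTree) {x y : V} (hxy : T.Adj x y)
    (hstar : ∀ w, w ≠ x → w ≠ y → T.Adj w x ∨ T.Adj w y) : T.IsIndepSet {x, y}ᶜ := by
  intro w hw w' hw' _
  simp only [Set.mem_compl_iff, Set.mem_insert_iff, Set.mem_singleton_iff, not_or] at hw hw'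
  rcases hstar w hw.1 hw.2 with hwx | hwy
  · exact hT.not_adj_of_adj_of_adj hxy hwx hw.2 hw'.1 (hstar w' hw'.1 hw'.2)
  · exact hT.not_adj_of_adj_of_adj hxy.symm hwy hw.1 hw'.2 (hstar w' hw'.1 hw'.2).symm

lemma IsTree.exists_doubleStar_of_diam_eq_three (hT : T.IsTree) (hdiam : T.diam = 3) :
    ∃ x y u v : V, T.Adj x y ∧ T.Adj u x ∧ T.Adj v y ∧ u ≠ y ∧ v ≠ x ∧
      ∀ w, w ≠ x → w ≠ y → T.Adj w x ∨ T.Adj w y := by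
  have : Nonempty V := hT.connected.nonempty
  have hle : ∀ a b : V, T.dist a b ≤ 3 := fun a b =>
    hdiam ▸ T.dist_le_diam (ediam_ne_top_of_diam_ne_zero (by omega))
  obtain ⟨u, v, huv⟩ := T.exists_dist_eq_diam
  obtain ⟨p, hp⟩ := hT.connected.exists_walk_length_eq_dist u v
  rw [huv, hdiam] at hp
  rcases p with _ | ⟨hux, _ | ⟨hxy, _ | ⟨hyv, _ | ⟨_, _⟩⟩⟩⟩ <;> simp at hp
  rename_i x y
  have adj_of_dist {a b : V} (hab : a ≠ b) (h : T.dist a b ≤ 1) : T.Adj a b :=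
    dist_eq_one_iff_adj.mp (by have := hT.connected.pos_dist_of_ne hab; omega)
  have huy : u ≠ y := by
    rintro rfl
    simp [dist_eq_one_iff_adj.mpr hyv, hdiam] at huv
  have hvx : v ≠ x := by
    rintro rfl
    simp [dist_eq_one_iff_adj.mpr hux, hdiam] at huv
  refine ⟨x, y, u, v, hxy, hux, hyv.symm, huy, hvx, fun w hwx hwy => ?_⟩
  rcases hT.dist_eq_dist_add_one_of_adj w hxy with h | h
  · have := hT.dist_eq_dist_add_one_of_adj_of_ne w hxy.symm hux.symm huy h
    exact Or.inr (adj_of_dist hwy (by have := hle w u; omega))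
  · have := hT.dist_eq_dist_add_one_of_adj_of_ne w hxy hyv hvx h
    exact Or.inl (adj_of_dist hwx (by have := hle w v; omega))

lemma exists_adj_sym2_ne_of_forall_adj_or_adj {x y u v : V} (hux : T.Adj u x) (hvy : T.Adj v y)
    (huy : u ≠ y) (hvx : v ≠ x) (hstar : ∀ w, w ≠ x → w ≠ y → T.Adj w x ∨ T.Adj w y) (w : V) :
    ∃ z, T.Adj w z ∧ s(w, z) ≠ s(x, y) := by
  by_cases hwx : w = x
  · exact ⟨u, hwx ▸ hux.symm, by simp [hwx, huy, hux.ne]⟩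
  by_cases hwy : w = y
  · exact ⟨v, hwy ▸ hvy.symm, by simp [hwy, hvx, hvy.ne]⟩
  obtain h | h := hstar w hwx hwy
  · exact ⟨x, h, by simp [hwx, hwy]⟩
  · exact ⟨y, h, by simp [hwx, hwy]⟩

end SimpleGraph

open SimpleGraph in
theorem domNum_middle_tree_diam_three_general {V : Type*} [Fintype V] (T : SimpleGraph V) (n : ℕ)
    (hord : Fintype.card V = n) (hT : T.IsTree) (hdiam : T.diam = 3) :
    domNum (middleGraph T) = n - 2 := by
  classical
  obtain ⟨x, y, u, v, hxy, hux, hvy, huy, hvx, hstar⟩ :=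
    hT.exists_doubleStar_of_diam_eq_three hdiam
  have hleaves : ({x, y}ᶜ : Set V).ncard = n - 2 := by
    rw [Set.ncard_compl, Set.ncard_pair hxy.ne, Nat.card_eq_fintype_card, hord]
  set central : T.edgeSet := ⟨s(x, y), hxy⟩
  have hcover : ∀ w, ∃ e ∈ ({central}ᶜ : Set T.edgeSet), w ∈ (e : Sym2 V) := by
    intro w
    obtain ⟨z, hwz, hne⟩ := exists_adj_sym2_ne_of_forall_adj_or_adj hux hvy huy hvx hstar w
    exact ⟨⟨s(w, z), hwz⟩, fun h => hne (congrArg Subtype.val h), Sym2.mem_mk_left w z⟩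
  have hedges : ({central}ᶜ : Set T.edgeSet).ncard = n - 2 := by
    have := hT.card_edgeFinset
    rw [edgeFinset_card] at this
    rw [Set.ncard_compl, Set.ncard_singleton, Nat.card_eq_fintype_card]
    omega
  apply le_antisymm
  · exact hedges ▸ domNum_middleGraph_le_ncard hcover
  · exact hleaves ▸ ncard_le_domNum_middleGraph (hT.isIndepSet_compl_pair hxy hstar)

/-- For a tree `T` of order `n ≥ 4` with diameter `3`, `γ(M(T)) = n - 2`. -/
theorem domNum_middle_tree_diam_three {V : Type*} [Fintype V] (T : SimpleGraph V) (n : ℕ)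
    (hord : Fintype.card V = n) (hn : 4 ≤ n) (hT : T.IsTree) (hdiam : T.diam = 3) :
    domNum (middleGraph T) = n - 2 :=
  domNum_middle_tree_diam_three_general T n hord hT hdiam
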